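/- arXiv:1904.05848 — 2 statements merged into one kernel-verified Lean document; each statement's English description precedes it below -/
import Mathlib

section
/- Assume Φ satisfies ESC (constant α̲), UCC (constant θ), BDP (constant K, together with its geometric consequence that φ_ω^n(B(x,r)) ⊇ B(φ_ω^n(x), K^{-1}‖Dφ_ω^n‖r) for every ball B(x,r) ⊆ X), and NEQ with constant ε > 0, and that the centers x^{(n)} are chosen in J_n ∩ X_ε. Then there exists N ∈ ℕ such that for all n ≥ N and every ω ∈ I^n, the shrinking target B_ω is contained in φ_ω^n(X). -/
open Set Metric MeasureTheory Filter

noncomputable section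

/-- Points of Euclidean space `ℝ^d`. -/
abbrev Pt (d : ℕ) : Type := EuclideanSpace ℝ (Fin d)

/-- A nonautonomous conformal iterated function system on a compact convex set
`X ⊆ ℝ^d` with nonempty interior, contained in a bounded open connected set `V`.
`I n` is the (finite, nonempty) alphabet at level `n` (0-indexed version of `I^{(n+1)}`),
`φ n e` the corresponding injective conformal contraction, whose derivative at every
point of `V` is a similarity with (positive) scaling factor `D n e x`. -/
structure NCIFS (d : ℕ) (E : Type) [DecidableEq E] : Type where
  X : Set (Pt d)
  V : Set (Pt d)
  compactX : IsCompact X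
  convexX : Convex ℝ X
  intX : (interior X).Nonempty
  XsubV : X ⊆ V
  openV : IsOpen V
  bddV : Bornology.IsBounded V
  connV : IsConnected V
  I : ℕ → Finset E
  Ine : ∀ n, (I n).Nonempty
  φ : ℕ → E → Pt d → Pt d
  D : ℕ → E → Pt d → ℝ
  Dpos : ∀ n e, e ∈ I n → ∀ x ∈ V, 0 < D n e x
  mapsV : ∀ n e, e ∈ I n → Set.MapsTo (φ n e) V V
  mapsX : ∀ n e, e ∈ I n → Set.MapsTo (φ n e) X X
  injV : ∀ n e, e ∈ I n → Set.InjOn (φ n e) V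
  conformal : ∀ n e, e ∈ I n → ∀ x ∈ V,
    ∃ A : Pt d →L[ℝ] Pt d, HasFDerivAt (φ n e) A x ∧ ∀ v, ‖A v‖ = D n e x * ‖v‖
  contractX : ∀ n e, e ∈ I n → ∀ x ∈ X, D n e x < 1

/-- Extension of a finite word to an infinite sequence (values beyond the word
are an arbitrary fixed element; they are never used). -/
def wext {E : Type} [Nonempty E] {q : ℕ} (ω : Fin q → E) : ℕ → E :=
  fun j => if h : j < q then ω ⟨j, h⟩ else Classical.arbitrary E

/-- Concatenation `ωξ` of a finite word `ω` of length `n` with an infinite tail `ξ`. -/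
def wcat {E : Type} {n : ℕ} (ω : Fin n → E) (ξ : ℕ → E) : ℕ → E :=
  fun j => if h : j < n then ω ⟨j, h⟩ else ξ (j - n)

namespace NCIFS

variable {d : ℕ} {E : Type} [DecidableEq E]

/-- The finite words occupying levels `m, m+1, …, m+q-1`. -/
def words (S : NCIFS d E) (m q : ℕ) : Finset (Fin q → E) :=
  Fintype.piFinset fun k => S.I (m + (k : ℕ))

/-- The composition `φ_{ξ 0}^{(m)} ∘ φ_{ξ 1}^{(m+1)} ∘ ⋯ ∘ φ_{ξ (q-1)}^{(m+q-1)}`. -/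
def comp (S : NCIFS d E) : ℕ → ℕ → (ℕ → E) → Pt d → Pt d
  | _, 0, _ => id
  | m, q + 1, ξ => S.φ m (ξ 0) ∘ S.comp (m + 1) q (fun j => ξ (j + 1))

/-- The scaling factor `|Dφ_ξ^{(m,…,m+q-1)}(x)|` of the composition, via the chain rule. -/
def Dw (S : NCIFS d E) : ℕ → ℕ → (ℕ → E) → Pt d → ℝ
  | _, 0, _, _ => 1
  | m, q + 1, ξ, x =>
      S.D m (ξ 0) (S.comp (m + 1) q (fun j => ξ (j + 1)) x) *
        S.Dw (m + 1) q (fun j => ξ (j + 1)) x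

/-- `‖Dφ_ξ‖ = sup_{x ∈ X} |Dφ_ξ(x)|`. -/
def normDw (S : NCIFS d E) (m q : ℕ) (ξ : ℕ → E) : ℝ :=
  sSup {r | ∃ x ∈ S.X, r = S.Dw m q ξ x}

/-- `κ̲_{(n)}`: minimum over `j ∈ I^{(n)}` and `x ∈ X` of `|Dφ_j^{(n)}(x)|`. -/
def kminLv (S : NCIFS d E) (n : ℕ) : ℝ :=
  sInf {r | ∃ e ∈ S.I n, ∃ x ∈ S.X, r = S.D n e x}

/-- `κ̄_{(n)}`: maximum over `j ∈ I^{(n)}` and `x ∈ X` of `|Dφ_j^{(n)}(x)|`. -/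
def kmaxLv (S : NCIFS d E) (n : ℕ) : ℝ :=
  sSup {r | ∃ e ∈ S.I n, ∃ x ∈ S.X, r = S.D n e x}

/-- `κ̲_n`: minimum over words `ω ∈ I^n` and `x ∈ X` of `|Dφ_ω^n(x)|`. -/
def kmin [Nonempty E] (S : NCIFS d E) (n : ℕ) : ℝ :=
  sInf {r | ∃ ω ∈ S.words 0 n, ∃ x ∈ S.X, r = S.Dw 0 n (wext ω) x}

/-- `κ̄_n`: maximum over words `ω ∈ I^n` and `x ∈ X` of `|Dφ_ω^n(x)|`. -/
def kmax [Nonempty E] (S : NCIFS d E) (n : ℕ) : ℝ :=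
  sSup {r | ∃ ω ∈ S.words 0 n, ∃ x ∈ S.X, r = S.Dw 0 n (wext ω) x}

/-- The partition function `Z_n(t) = Σ_{ω ∈ I^n} ‖Dφ_ω^n‖^t`. -/
def Z [Nonempty E] (S : NCIFS d E) (n : ℕ) (t : ℝ) : ℝ :=
  ∑ ω ∈ S.words 0 n, (S.normDw 0 n (wext ω)) ^ t

/-- `‖Dφ_e^{(n)}‖`. -/
def normLv (S : NCIFS d E) (n : ℕ) (e : E) : ℝ :=
  sSup {r | ∃ x ∈ S.X, r = S.D n e x}

/-- `ρ_n = max_{a,b ∈ I^{(n)}} ‖Dφ_a^{(n)}‖ / ‖Dφ_b^{(n)}‖`. -/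
def ρ (S : NCIFS d E) (n : ℕ) : ℝ :=
  sSup {r | ∃ a ∈ S.I n, ∃ b ∈ S.I n, r = S.normLv n a / S.normLv n b}

/-- `min_{a ∈ I^{(n)}} ‖Dφ_a^{(n)}‖`. -/
def minNormLv (S : NCIFS d E) (n : ℕ) : ℝ :=
  sInf {r | ∃ e ∈ S.I n, r = S.normLv n e}

/-- The limit set `J = ⋂_{n ≥ 1} ⋃_{ω ∈ I^n} φ_ω^n(X)`. -/
def limitSet [Nonempty E] (S : NCIFS d E) : Set (Pt d) :=
  ⋂ n ∈ Set.Ici 1, ⋃ ω ∈ S.words 0 n, S.comp 0 n (wext ω) '' S.X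

/-- `J_n = π_n(I^{(n+1,∞)})`: points lying in the nested intersection
`⋂_k φ_ξ^{(n,…,n+k-1)}(X)` for some admissible tail `ξ`. -/
def Jlv (S : NCIFS d E) (n : ℕ) : Set (Pt d) :=
  {x | ∃ ξ : ℕ → E, (∀ j, ξ j ∈ S.I (n + j)) ∧ ∀ k, x ∈ S.comp n k ξ '' S.X}

/-- `X_ε = X \ B(ℝ^d \ X, ε)`. -/
def Xeps (S : NCIFS d E) (ε : ℝ) : Set (Pt d) :=
  S.X \ ⋃ y ∈ S.Xᶜ, Metric.ball y ε

/-- Open set condition. -/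
def OSC (S : NCIFS d E) : Prop :=
  ∀ n, ∀ i ∈ S.I n, ∀ j ∈ S.I n, i ≠ j →
    S.φ n i '' interior S.X ∩ S.φ n j '' interior S.X = ∅

/-- Uniformly contracting condition with constant `θ`. -/
def UCC (S : NCIFS d E) (θ : ℝ) : Prop :=
  0 < θ ∧ ∀ n, S.kmaxLv n ≤ Real.exp (-θ)

/-- Bounded distortion property with constant `K`. -/
def BDP [Nonempty E] (S : NCIFS d E) (K : ℝ) : Prop :=
  1 ≤ K ∧ ∀ n, ∀ ω ∈ S.words 0 n, ∀ x ∈ S.X, ∀ y ∈ S.X,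
    S.Dw 0 n (wext ω) x ≤ K * S.Dw 0 n (wext ω) y

/-- Non-empty quasi middle condition with constant `ε`. -/
def NEQ (S : NCIFS d E) (ε : ℝ) : Prop :=
  0 < ε ∧ ∀ n, (S.Jlv n ∩ S.Xeps ε).Nonempty

end NCIFS

/-- The (topological) support of a measure: points all of whose balls have positive measure. -/
def msupp {d : ℕ} (μ : Measure (Pt d)) : Set (Pt d) :=
  {x | ∀ r : ℝ, 0 < r → 0 < μ (Metric.ball x r)}

/-- `μ` is `h`-Ahlfors regular with constant `C`. -/
def Ahlfors {d : ℕ} (μ : Measure (Pt d)) (h C : ℝ) : Prop :=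
  1 ≤ C ∧ ∀ x ∈ msupp μ, ∀ r : ℝ, 0 < r → r ≤ 1 →
    ENNReal.ofReal (C⁻¹ * r ^ h) ≤ μ (Metric.ball x r) ∧
      μ (Metric.ball x r) ≤ ENNReal.ofReal (C * r ^ h)

/-- Shrinking-target data for a nonautonomous conformal IFS: the functions `β_n`
(positive on admissible tails), fixed admissible tails `ξ^{(n)}` and centers `x^{(n)} ∈ X`. -/
structure STData {d : ℕ} {E : Type} [DecidableEq E] (S : NCIFS d E) : Type where
  β : ℕ → (ℕ → E) → ℝ
  βpos : ∀ n ξ, (∀ j, ξ j ∈ S.I (n + j)) → 0 < β n ξ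
  ξt : ℕ → ℕ → E
  ξtmem : ∀ n j, ξt n j ∈ S.I (n + j)
  xc : ℕ → Pt d
  xcX : ∀ n, xc n ∈ S.X

namespace STData

variable {d : ℕ} {E : Type} [DecidableEq E] {S : NCIFS d E}

/-- The Birkhoff-type sum `S_nβ(ξ) = Σ_{k<n} β_k(σ^k ξ)`. -/
def Snβ (T : STData S) (n : ℕ) (ξ : ℕ → E) : ℝ :=
  ∑ k ∈ Finset.range n, T.β k (fun j => ξ (k + j))

/-- The radius `e^{-S_nβ(ωξ^{(n)})}` of the shrinking target `B_ω`. -/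
def radius (T : STData S) {n : ℕ} (ω : Fin n → E) : ℝ :=
  Real.exp (-(T.Snβ n (wcat ω (T.ξt n))))

/-- The shrinking target `B_ω = B(φ_ω^n(x^{(n)}), e^{-S_nβ(ωξ^{(n)})})`. -/
def tball [Nonempty E] (T : STData S) (n : ℕ) (ω : Fin n → E) : Set (Pt d) :=
  Metric.ball (S.comp 0 n (wext ω) (T.xc n)) (T.radius ω)

/-- The shrinking-target set `𝒟 = ⋂_{N≥1} ⋃_{n≥N} ⋃_{ω ∈ I^n} B_ω`. -/
def target [Nonempty E] (T : STData S) : Set (Pt d) :=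
  ⋂ N ∈ Set.Ici 1, ⋃ n ∈ Set.Ici N, ⋃ ω ∈ S.words 0 n, T.tball n ω

/-- The upper pressure `P̄_β(t)`. -/
def upperP (T : STData S) (t : ℝ) : ℝ :=
  Filter.limsup (fun n : ℕ =>
    (1 / (n : ℝ)) *
      Real.log (∑ ω ∈ S.words 0 n, Real.exp (-t * T.Snβ n (wcat ω (T.ξt n)))))
    Filter.atTop

/-- The lower pressure `P̲_β(t)`. -/
def lowerP (T : STData S) (t : ℝ) : ℝ :=
  Filter.liminf (fun n : ℕ =>
    (1 / (n : ℝ)) *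
      Real.log (∑ ω ∈ S.words 0 n, Real.exp (-t * T.Snβ n (wcat ω (T.ξt n)))))
    Filter.atTop

/-- The Bowen parameter `b = inf {t ≥ 0 : P̄_β(t) < 0}`. -/
def bowen (T : STData S) : ℝ := sInf {t : ℝ | 0 ≤ t ∧ T.upperP t < 0}

/-- `β` is tame: the upper pressure is strictly decreasing. -/
def tame (T : STData S) : Prop := StrictAntiOn T.upperP (Set.Ici 0)

/-- Exponentially shrinking condition with constants `al ≤ au`. -/
def ESC (T : STData S) (al au : ℝ) : Prop :=
  0 < al ∧ al ≤ au ∧ ∀ k, ∀ ξ : ℕ → E, (∀ j, ξ j ∈ S.I (k + j)) →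
    al ≤ T.β k ξ + Real.log (S.kminLv k) ∧ T.β k ξ + Real.log (S.kmaxLv k) ≤ au

/-- Linear variation condition. -/
def LVC (T : STData S) : Prop :=
  Filter.Tendsto (fun n : ℕ =>
    (1 / (n : ℝ)) *
      (sSup {r | ∃ ξ : ℕ → E, (∀ j, ξ j ∈ S.I j) ∧ r = T.Snβ n ξ} -
        sInf {r | ∃ ξ : ℕ → E, (∀ j, ξ j ∈ S.I j) ∧ r = T.Snβ n ξ}))
    Filter.atTop (nhds 0)

end STData

/-! ESC bounds each factor `e^{-β_k}` of the radius of `B_ω` by `e^{-α̲} κ̲_{(k)}`, so the radius is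
at most `e^{-nα̲} ∏ κ̲_{(k)} ≤ e^{-nα̲} ‖Dφ_ω^n‖`; taking logarithms needs `κ̲_{(k)} > 0`, which
follows from bounded distortion. Once `e^{-nα̲} < ε / K`, the target lies in the ball of radius
`K⁻¹ ‖Dφ_ω^n‖ ε` about `φ_ω^n(x^{(n)})`, which the geometric form of BDP puts inside
`φ_ω^n(B(x^{(n)}, ε)) ⊆ φ_ω^n(X)` because `x^{(n)} ∈ X_ε`. -/

namespace NCIFS

variable {d : ℕ} {E : Type} [DecidableEq E] (S : NCIFS d E)

def Admissible (m q : ℕ) (ξ : ℕ → E) : Prop :=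
  ∀ j < q, ξ j ∈ S.I (m + j)

variable {S}

lemma Admissible.head {m q : ℕ} {ξ : ℕ → E} (h : S.Admissible m (q + 1) ξ) : ξ 0 ∈ S.I m :=
  h 0 q.succ_pos

lemma Admissible.tail {m q : ℕ} {ξ : ℕ → E} (h : S.Admissible m (q + 1) ξ) :
    S.Admissible (m + 1) q (fun j => ξ (j + 1)) := fun j hj => by
  simpa only [Nat.add_right_comm, Nat.add_assoc] using h (j + 1) (by omega)

variable (S)

lemma admissible_wext [Nonempty E] {m n : ℕ} {ω : Fin n → E} (hω : ω ∈ S.words m n) :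
    S.Admissible m n (wext ω) := fun j hj => by
  simpa [wext, hj] using Fintype.mem_piFinset.mp hω ⟨j, hj⟩

lemma D_pos {k : ℕ} {e : E} (he : e ∈ S.I k) {x : Pt d} (hx : x ∈ S.X) : 0 < S.D k e x :=
  S.Dpos k e he x (S.XsubV hx)

lemma comp_congr : ∀ {q m : ℕ} {ξ ξ' : ℕ → E}, (∀ j < q, ξ j = ξ' j) →
    S.comp m q ξ = S.comp m q ξ'
  | 0, _, _, _, _ => rfl
  | q + 1, _, _, _, h => by
    rw [comp, comp, h 0 q.succ_pos, comp_congr fun j (hj : j < q) => h (j + 1) (by omega)]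

lemma Dw_congr : ∀ {q m : ℕ} {ξ ξ' : ℕ → E}, (∀ j < q, ξ j = ξ' j) →
    S.Dw m q ξ = S.Dw m q ξ'
  | 0, _, _, _, _ => rfl
  | q + 1, _, _, _, h => funext fun x => by
    have htail := fun j (hj : j < q) => h (j + 1) (by omega)
    rw [Dw, Dw, h 0 q.succ_pos, S.comp_congr htail, Dw_congr htail]

lemma comp_mapsTo : ∀ {q m : ℕ} {ξ : ℕ → E}, S.Admissible m q ξ → MapsTo (S.comp m q ξ) S.X S.X
  | 0, _, _, _ => mapsTo_id _
  | _ + 1, _, _, h => (S.mapsX _ _ h.head).comp (comp_mapsTo h.tail)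

lemma Dw_pos : ∀ {q m : ℕ} {ξ : ℕ → E}, S.Admissible m q ξ → ∀ {x}, x ∈ S.X → 0 < S.Dw m q ξ x
  | 0, _, _, _, _, _ => one_pos
  | _ + 1, _, _, h, _, hx =>
    mul_pos (S.D_pos h.head (S.comp_mapsTo h.tail hx)) (Dw_pos h.tail hx)

lemma comp_succ_last : ∀ (q m : ℕ) (ξ : ℕ → E) (x : Pt d),
    S.comp m (q + 1) ξ x = S.comp m q ξ (S.φ (m + q) (ξ q) x)
  | 0, _, _, _ => rfl
  | q + 1, m, ξ, x => by
    rw [comp, Function.comp_apply, comp_succ_last q, comp, Function.comp_apply,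
      Nat.add_right_comm, Nat.add_assoc]

lemma Dw_succ_last : ∀ (q m : ℕ) (ξ : ℕ → E) (x : Pt d),
    S.Dw m (q + 1) ξ x = S.Dw m q ξ (S.φ (m + q) (ξ q) x) * S.D (m + q) (ξ q) x
  | 0, _, _, _ => by simp [Dw, comp]
  | q + 1, m, ξ, x => by
    rw [Dw, Dw_succ_last q, S.comp_succ_last q, Dw, Nat.add_right_comm, Nat.add_assoc, mul_assoc]

/-- Comparing the distortion of a word of length `k + 1` ending in `e` with that of its prefix
of length `k` isolates the distortion of `φ k e`. -/
lemma D_le_sq_mul_D [Nonempty E] {K : ℝ} (hBDP : S.BDP K) {k : ℕ} {e : E} (he : e ∈ S.I k)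
    {x y : Pt d} (hx : x ∈ S.X) (hy : y ∈ S.X) : S.D k e x ≤ K ^ 2 * S.D k e y := by
  let ζ : ℕ → E := fun j => (S.Ine j).choose
  have hζ : ∀ j, ζ j ∈ S.I j := fun j => (S.Ine j).choose_spec
  let ω : Fin (k + 1) → E := fun i => if (i : ℕ) = k then e else ζ i
  let ω' : Fin k → E := fun i => ζ i
  have hω : ω ∈ S.words 0 (k + 1) := Fintype.mem_piFinset.mpr fun i => by
    by_cases hi : (i : ℕ) = k <;> simp [ω, hi, he, hζ]
  have hω' : ω' ∈ S.words 0 k := Fintype.mem_piFinset.mpr fun i => by simp [ω', hζ]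
  have hprefix : S.Dw 0 k (wext ω') = S.Dw 0 k (wext ω) := S.Dw_congr fun j hj => by
    simp [wext, ω, ω', hj, Nat.lt_succ_of_lt hj, hj.ne]
  have hsplit : ∀ z, S.Dw 0 (k + 1) (wext ω) z = S.Dw 0 k (wext ω) (S.φ k e z) * S.D k e z := by
    intro z
    simpa [wext, ω] using S.Dw_succ_last k 0 (wext ω) z
  have hK : 0 ≤ K := zero_le_one.trans hBDP.1
  set P := S.Dw 0 k (wext ω)
  have hlong : P (S.φ k e x) * S.D k e x ≤ K * (P (S.φ k e y) * S.D k e y) := by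
    simpa only [hsplit] using hBDP.2 (k + 1) ω hω x hx y hy
  have hshort : P (S.φ k e y) ≤ K * P (S.φ k e x) := by
    simpa only [hprefix] using
      hBDP.2 k ω' hω' _ (S.mapsX k e he hy) _ (S.mapsX k e he hx)
  have hPpos : 0 < P (S.φ k e x) := by
    rw [← hprefix]
    exact S.Dw_pos (S.admissible_wext hω') (S.mapsX k e he hx)
  refine le_of_mul_le_mul_left ?_ hPpos
  calc P (S.φ k e x) * S.D k e x ≤ K * (P (S.φ k e y) * S.D k e y) := hlong
    _ ≤ K * (K * P (S.φ k e x) * S.D k e y) := by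
        gcongr
        exact (S.D_pos he hy).le
    _ = P (S.φ k e x) * (K ^ 2 * S.D k e y) := by ring

lemma kminLv_nonneg (k : ℕ) : 0 ≤ S.kminLv k :=
  Real.sInf_nonneg <| by rintro r ⟨e, he, x, hx, rfl⟩; exact (S.D_pos he hx).le

lemma kminLv_le {k : ℕ} {e : E} (he : e ∈ S.I k) {x : Pt d} (hx : x ∈ S.X) :
    S.kminLv k ≤ S.D k e x :=
  csInf_le ⟨0, by rintro r ⟨e, he, x, hx, rfl⟩; exact (S.D_pos he hx).le⟩ ⟨e, he, x, hx, rfl⟩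

lemma kminLv_pos [Nonempty E] {K : ℝ} (hBDP : S.BDP K) (k : ℕ) : 0 < S.kminLv k := by
  obtain ⟨x₀, hx₀⟩ := S.intX
  have hx₀X : x₀ ∈ S.X := interior_subset hx₀
  obtain ⟨e₀, he₀, hmin⟩ := (S.I k).exists_min_image (fun e => S.D k e x₀) (S.Ine k)
  have hK : 0 < K ^ 2 := by have := hBDP.1; positivity
  have hlow : 0 < (K ^ 2)⁻¹ * S.D k e₀ x₀ := by have := S.D_pos he₀ hx₀X; positivity
  refine hlow.trans_le (le_csInf ⟨_, e₀, he₀, x₀, hx₀X, rfl⟩ ?_)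
  rintro r ⟨e, he, x, hx, rfl⟩
  rw [inv_mul_le_iff₀ hK]
  exact (hmin e he).trans (S.D_le_sq_mul_D hBDP he hx₀X hx)

lemma prod_kminLv_le_Dw : ∀ {q m : ℕ} {ξ : ℕ → E}, S.Admissible m q ξ → ∀ {x}, x ∈ S.X →
    ∏ k ∈ Finset.range q, S.kminLv (m + k) ≤ S.Dw m q ξ x
  | 0, _, _, _, _, _ => (Finset.prod_range_zero _).le
  | q + 1, m, ξ, h, x, hx => by
    have hshift : ∀ k, S.kminLv (m + (k + 1)) = S.kminLv (m + 1 + k) := fun k => by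
      rw [Nat.add_right_comm, Nat.add_assoc]
    rw [Finset.prod_range_succ', Dw, mul_comm, Nat.add_zero]
    simp only [hshift]
    exact mul_le_mul (S.kminLv_le h.head (S.comp_mapsTo h.tail hx)) (prod_kminLv_le_Dw h.tail hx)
      (Finset.prod_nonneg fun _ _ => S.kminLv_nonneg _) (S.D_pos h.head (S.comp_mapsTo h.tail hx)).le

lemma Dw_le_normDw [Nonempty E] {K : ℝ} (hBDP : S.BDP K) {n : ℕ} {ω : Fin n → E}
    (hω : ω ∈ S.words 0 n) {x : Pt d} (hx : x ∈ S.X) :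
    S.Dw 0 n (wext ω) x ≤ S.normDw 0 n (wext ω) :=
  le_csSup ⟨K * S.Dw 0 n (wext ω) x, by rintro r ⟨y, hy, rfl⟩; exact hBDP.2 n ω hω y hy x hx⟩
    ⟨x, hx, rfl⟩

lemma prod_kminLv_le_normDw [Nonempty E] {K : ℝ} (hBDP : S.BDP K) {n : ℕ} {ω : Fin n → E}
    (hω : ω ∈ S.words 0 n) : ∏ k ∈ Finset.range n, S.kminLv k ≤ S.normDw 0 n (wext ω) := by
  obtain ⟨x, hx⟩ := S.intX
  have hxX : x ∈ S.X := interior_subset hx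
  simpa only [zero_add] using
    (S.prod_kminLv_le_Dw (S.admissible_wext hω) hxX).trans (S.Dw_le_normDw hBDP hω hxX)

lemma ball_subset_of_mem_Xeps {ε : ℝ} {x : Pt d} (hx : x ∈ S.Xeps ε) : ball x ε ⊆ S.X := by
  intro z hz
  by_contra hzX
  exact hx.2 (mem_biUnion hzX (by rwa [mem_ball, dist_comm]))

end NCIFS

namespace STData

variable {d : ℕ} {E : Type} [DecidableEq E] {S : NCIFS d E} (T : STData S)

lemma wcat_mem [Nonempty E] {n : ℕ} {ω : Fin n → E} (hω : ω ∈ S.words 0 n) (j : ℕ) :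
    wcat ω (T.ξt n) j ∈ S.I j := by
  by_cases hj : j < n
  · simpa [wcat, wext, hj] using S.admissible_wext hω j hj
  · simpa [wcat, hj, Nat.add_sub_cancel' (not_lt.mp hj)] using T.ξtmem n (j - n)

variable {T}

lemma exp_neg_β_le {al au : ℝ} (hESC : T.ESC al au) {k : ℕ} (hκ : 0 < S.kminLv k)
    {ξ : ℕ → E} (hξ : ∀ j, ξ j ∈ S.I (k + j)) :
    Real.exp (-T.β k ξ) ≤ Real.exp (-al) * S.kminLv k := by
  rw [← Real.exp_log hκ, ← Real.exp_add]
  exact Real.exp_le_exp.mpr (by linarith [(hESC.2.2 k ξ hξ).1])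

lemma radius_le [Nonempty E] {al au : ℝ} (hESC : T.ESC al au) (hκ : ∀ k, 0 < S.kminLv k)
    {n : ℕ} {ω : Fin n → E} (hω : ω ∈ S.words 0 n) :
    T.radius ω ≤ Real.exp (-al) ^ n * ∏ k ∈ Finset.range n, S.kminLv k := by
  rw [radius, Snβ, ← Finset.sum_neg_distrib, Real.exp_sum]
  calc _ ≤ ∏ k ∈ Finset.range n, Real.exp (-al) * S.kminLv k :=
        Finset.prod_le_prod (fun _ _ => (Real.exp_pos _).le)
          fun k _ => exp_neg_β_le hESC (hκ k) fun j => T.wcat_mem hω (k + j)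
    _ = _ := by rw [Finset.prod_mul_distrib, Finset.prod_const, Finset.card_range]

end STData

theorem targets_in_images_general {d : ℕ} {E : Type} [DecidableEq E] [Nonempty E]
    (S : NCIFS d E) (T : STData S)
    (al au K ε : ℝ)
    (hESC : T.ESC al au) (hBDP : S.BDP K)
    (hgeom : ∀ n, ∀ ω ∈ S.words 0 n, ∀ (x : Pt d) (r : ℝ), Metric.ball x r ⊆ S.X →
      Metric.ball (S.comp 0 n (wext ω) x) (K⁻¹ * S.normDw 0 n (wext ω) * r) ⊆
        S.comp 0 n (wext ω) '' Metric.ball x r)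
    (hNEQ : S.NEQ ε)
    (hxc : ∀ n, T.xc n ∈ S.Jlv n ∩ S.Xeps ε) :
    ∃ N : ℕ, ∀ n, N ≤ n → ∀ ω ∈ S.words 0 n,
      T.tball n ω ⊆ S.comp 0 n (wext ω) '' S.X := by
  have hscale : 0 < K⁻¹ * ε := mul_pos (inv_pos.mpr (zero_lt_one.trans_le hBDP.1)) hNEQ.1
  have hdecay : Tendsto (fun n : ℕ => Real.exp (-al) ^ n) atTop (nhds 0) :=
    tendsto_pow_atTop_nhds_zero_of_lt_one (Real.exp_pos _).le
      (Real.exp_lt_one_iff.mpr (neg_lt_zero.mpr hESC.1))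
  obtain ⟨N, hN⟩ := eventually_atTop.mp (hdecay.eventually_lt_const hscale)
  refine ⟨N, fun n hn ω hω => ?_⟩
  have hball := S.ball_subset_of_mem_Xeps (hxc n).2
  have hradius : T.radius ω ≤ K⁻¹ * S.normDw 0 n (wext ω) * ε :=
    calc T.radius ω ≤ Real.exp (-al) ^ n * ∏ k ∈ Finset.range n, S.kminLv k :=
          STData.radius_le hESC (S.kminLv_pos hBDP) hω
      _ ≤ K⁻¹ * ε * S.normDw 0 n (wext ω) :=
          mul_le_mul (hN n hn).le (S.prod_kminLv_le_normDw hBDP hω)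
            (Finset.prod_nonneg fun _ _ => S.kminLv_nonneg _) hscale.le
      _ = K⁻¹ * S.normDw 0 n (wext ω) * ε := by ring
  calc T.tball n ω ⊆ ball (S.comp 0 n (wext ω) (T.xc n)) (K⁻¹ * S.normDw 0 n (wext ω) * ε) :=
        ball_subset_ball hradius
    _ ⊆ S.comp 0 n (wext ω) '' ball (T.xc n) ε := hgeom n ω hω _ ε hball
    _ ⊆ S.comp 0 n (wext ω) '' S.X := image_mono hball

/-- Under ESC, UCC, BDP (with its geometric ball-inclusion consequence)
and NEQ, with centers `x^{(n)} ∈ J_n ∩ X_ε`, for all sufficiently large `n` every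
shrinking target `B_ω`, `ω ∈ I^n`, is contained in `φ_ω^n(X)`. -/
theorem targets_in_images {d : ℕ} {E : Type} [DecidableEq E] [Nonempty E]
    (hd : 1 ≤ d) (S : NCIFS d E) (T : STData S)
    (al au θ K ε : ℝ)
    (hESC : T.ESC al au) (hUCC : S.UCC θ) (hBDP : S.BDP K)
    (hgeom : ∀ n, ∀ ω ∈ S.words 0 n, ∀ (x : Pt d) (r : ℝ), Metric.ball x r ⊆ S.X →
      Metric.ball (S.comp 0 n (wext ω) x) (K⁻¹ * S.normDw 0 n (wext ω) * r) ⊆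
        S.comp 0 n (wext ω) '' Metric.ball x r)
    (hNEQ : S.NEQ ε)
    (hxc : ∀ n, T.xc n ∈ S.Jlv n ∩ S.Xeps ε) :
    ∃ N : ℕ, ∀ n, N ≤ n → ∀ ω ∈ S.words 0 n,
      T.tball n ω ⊆ S.comp 0 n (wext ω) '' S.X :=
  targets_in_images_general S T al au K ε hESC hBDP hgeom hNEQ hxc
end
end

section
/- Suppose the unperturbed affine system Φ has the strong separation condition (g_{(n)} > 0 for all n). If 0 < ε_n < g_{(n)}/(2κ̄_{(n)}) for all n, then the perturbed system Φ̃ also has the strong separation condition; that is, for every n, all distinct i, j ∈ I^{(n)}, and all x, y ∈ [0,1], |φ̃_j^{(n)}(x) − φ̃_i^{(n)}(y)| > 0. -/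
open Set Metric MeasureTheory Filter

noncomputable section

/-- A nonautonomous IFS of affine contractions `x ↦ s x + c` on `[0,1]`. -/
structure AffIFS (E : Type) [DecidableEq E] : Type where
  I : ℕ → Finset E
  Ine : ∀ n, (I n).Nonempty
  s : ℕ → E → ℝ
  c : ℕ → E → ℝ
  sne : ∀ n e, e ∈ I n → s n e ≠ 0
  contra : ∀ n e, e ∈ I n → |s n e| < 1
  maps : ∀ n e, e ∈ I n → Set.MapsTo (fun x => s n e * x + c n e) (Set.Icc 0 1) (Set.Icc 0 1)

namespace AffIFS

variable {E : Type} [DecidableEq E]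

/-- The affine map `φ_e^{(n)}`. -/
def φ (A : AffIFS E) (n : ℕ) (e : E) (x : ℝ) : ℝ := A.s n e * x + A.c n e

/-- `κ̄_{(n)} = max_{e ∈ I^{(n)}} |(φ_e^{(n)})'|`. -/
def kmaxLv (A : AffIFS E) (n : ℕ) : ℝ := sSup {r | ∃ e ∈ A.I n, r = |A.s n e|}

/-- The smallest gap `g_{(n)}` between images of distinct level-`n` maps. -/
def gap (A : AffIFS E) (n : ℕ) : ℝ :=
  sInf {r | ∃ i ∈ A.I n, ∃ j ∈ A.I n, i ≠ j ∧
    ∃ x ∈ Set.Icc (0 : ℝ) 1, ∃ y ∈ Set.Icc (0 : ℝ) 1, r = |A.φ n j x - A.φ n i y|}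

end AffIFS

/-- Nonlinear perturbation data for an affine nonautonomous IFS on `[0,1]`:
points `u_e^{(n)} ∈ [0,1]` and Hölder-continuous functions
`γ_e^{(n)} : [0,1] → (−ε_n, ε_n)` with `ε_n ∈ (0,1)`. -/
structure Pert {E : Type} [DecidableEq E] (A : AffIFS E) : Type where
  u : ℕ → E → ℝ
  umem : ∀ n e, u n e ∈ Set.Icc (0 : ℝ) 1
  γ : ℕ → E → ℝ → ℝ
  ε : ℕ → ℝ
  εmem : ∀ n, ε n ∈ Set.Ioo (0 : ℝ) 1
  γbound : ∀ n e, e ∈ A.I n → ∀ x ∈ Set.Icc (0 : ℝ) 1, |γ n e x| < ε n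
  γholder : ∀ n e, e ∈ A.I n → ∃ C r : NNReal, 0 < r ∧
    HolderOnWith C r (γ n e) (Set.Icc 0 1)

namespace Pert

variable {E : Type} [DecidableEq E] {A : AffIFS E}

/-- The perturbed map
`φ̃_e^{(n)}(x) = φ_e^{(n)}(u_e^{(n)}) + (φ_e^{(n)})' ∫_{u_e^{(n)}}^x (1 + γ_e^{(n)}(t)) dt`. -/
def pmap (P : Pert A) (n : ℕ) (e : E) (x : ℝ) : ℝ :=
  A.φ n e (P.u n e) + A.s n e * ∫ t in (P.u n e)..x, (1 + P.γ n e t)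

/-- `γ̄^{(n)} = max_{e ∈ I^{(n)}} sup_{x ∈ [0,1]} |γ_e^{(n)}(x)|`. -/
def gbar (P : Pert A) (n : ℕ) : ℝ :=
  sSup {r | ∃ e ∈ A.I n, ∃ x ∈ Set.Icc (0 : ℝ) 1, r = |P.γ n e x|}

end Pert

/-- A general nonautonomous system of maps on `[0,1] ⊆ ℝ`, recorded together with the
modulus `Df` of the derivative of each map. -/
structure Sys1 (E : Type) [DecidableEq E] : Type where
  I : ℕ → Finset E
  f : ℕ → E → ℝ → ℝ
  Df : ℕ → E → ℝ → ℝ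

namespace Sys1

variable {E : Type} [DecidableEq E]

/-- The finite words occupying levels `m, m+1, …, m+q-1`. -/
def words (G : Sys1 E) (m q : ℕ) : Finset (Fin q → E) :=
  Fintype.piFinset fun k => G.I (m + (k : ℕ))

/-- The composition `f_{ξ 0}^{(m)} ∘ ⋯ ∘ f_{ξ (q-1)}^{(m+q-1)}`. -/
def comp (G : Sys1 E) : ℕ → ℕ → (ℕ → E) → ℝ → ℝ
  | _, 0, _ => id
  | m, q + 1, ξ => G.f m (ξ 0) ∘ G.comp (m + 1) q (fun j => ξ (j + 1))

/-- `|(f_ξ^{(m,…,m+q-1)})'(x)|` via the chain rule. -/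
def Dw (G : Sys1 E) : ℕ → ℕ → (ℕ → E) → ℝ → ℝ
  | _, 0, _, _ => 1
  | m, q + 1, ξ, x =>
      |G.Df m (ξ 0) (G.comp (m + 1) q (fun j => ξ (j + 1)) x)| *
        G.Dw (m + 1) q (fun j => ξ (j + 1)) x

/-- `κ̲_{(n)}`. -/
def kminLv (G : Sys1 E) (n : ℕ) : ℝ :=
  sInf {r | ∃ e ∈ G.I n, ∃ x ∈ Set.Icc (0 : ℝ) 1, r = |G.Df n e x|}

/-- `κ̄_{(n)}`. -/
def kmaxLv (G : Sys1 E) (n : ℕ) : ℝ :=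
  sSup {r | ∃ e ∈ G.I n, ∃ x ∈ Set.Icc (0 : ℝ) 1, r = |G.Df n e x|}

/-- `κ̲_n`. -/
def kmin [Nonempty E] (G : Sys1 E) (n : ℕ) : ℝ :=
  sInf {r | ∃ ω ∈ G.words 0 n, ∃ x ∈ Set.Icc (0 : ℝ) 1, r = G.Dw 0 n (wext ω) x}

/-- `κ̄_n`. -/
def kmax [Nonempty E] (G : Sys1 E) (n : ℕ) : ℝ :=
  sSup {r | ∃ ω ∈ G.words 0 n, ∃ x ∈ Set.Icc (0 : ℝ) 1, r = G.Dw 0 n (wext ω) x}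

/-- The limit set `J = ⋂_{n ≥ 1} ⋃_{ω ∈ I^n} f_ω^n([0,1])`. -/
def limitSet [Nonempty E] (G : Sys1 E) : Set ℝ :=
  ⋂ n ∈ Set.Ici 1, ⋃ ω ∈ G.words 0 n, G.comp 0 n (wext ω) '' Set.Icc 0 1

/-- `J_n`, the image of the level-`(n+1)`-onwards coding map. -/
def Jlv (G : Sys1 E) (n : ℕ) : Set ℝ :=
  {x | ∃ ξ : ℕ → E, (∀ j, ξ j ∈ G.I (n + j)) ∧ ∀ k, x ∈ G.comp n k ξ '' Set.Icc 0 1}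

/-- Open set condition. -/
def OSC (G : Sys1 E) : Prop :=
  ∀ n, ∀ i ∈ G.I n, ∀ j ∈ G.I n, i ≠ j →
    G.f n i '' interior (Set.Icc 0 1) ∩ G.f n j '' interior (Set.Icc 0 1) = ∅

/-- Uniformly contracting condition with constant `θ`. -/
def UCC (G : Sys1 E) (θ : ℝ) : Prop :=
  0 < θ ∧ ∀ n, G.kmaxLv n ≤ Real.exp (-θ)

/-- `X_ε = [0,1] \ B(ℝ \ [0,1], ε)`. -/
def Xeps (ε : ℝ) : Set ℝ :=
  Set.Icc 0 1 \ ⋃ y ∈ (Set.Icc (0 : ℝ) 1)ᶜ, Metric.ball y ε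

/-- Non-empty quasi middle condition with constant `ε`. -/
def NEQ (G : Sys1 E) (ε : ℝ) : Prop :=
  0 < ε ∧ ∀ n, (G.Jlv n ∩ Xeps ε).Nonempty

end Sys1

/-- The Birkhoff-type sum `S_nβ(ξ) = Σ_{k<n} β_k(σ^k ξ)`. -/
def Snb {E : Type} (β : ℕ → (ℕ → E) → ℝ) (n : ℕ) (ξ : ℕ → E) : ℝ :=
  ∑ k ∈ Finset.range n, β k (fun j => ξ (k + j))

/-- Exponentially shrinking condition for `β` with constants `al ≤ au`. -/
def ESC1 {E : Type} [DecidableEq E] (G : Sys1 E) (β : ℕ → (ℕ → E) → ℝ)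
    (al au : ℝ) : Prop :=
  0 < al ∧ al ≤ au ∧ ∀ k, ∀ ξ : ℕ → E, (∀ j, ξ j ∈ G.I (k + j)) →
    al ≤ β k ξ + Real.log (G.kminLv k) ∧ β k ξ + Real.log (G.kmaxLv k) ≤ au

/-- Linear variation condition for `β`. -/
def LVC1 {E : Type} [DecidableEq E] (G : Sys1 E) (β : ℕ → (ℕ → E) → ℝ) : Prop :=
  Filter.Tendsto (fun n : ℕ =>
    (1 / (n : ℝ)) *
      (sSup {r | ∃ ξ : ℕ → E, (∀ j, ξ j ∈ G.I j) ∧ r = Snb β n ξ} -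
        sInf {r | ∃ ξ : ℕ → E, (∀ j, ξ j ∈ G.I j) ∧ r = Snb β n ξ}))
    Filter.atTop (nhds 0)

/-- The upper pressure `P̄_β(t)`. -/
def upperP1 {E : Type} [DecidableEq E] [Nonempty E] (G : Sys1 E)
    (β : ℕ → (ℕ → E) → ℝ) (ξt : ℕ → ℕ → E) (t : ℝ) : ℝ :=
  Filter.limsup (fun n : ℕ =>
    (1 / (n : ℝ)) *
      Real.log (∑ ω ∈ G.words 0 n, Real.exp (-t * Snb β n (wcat ω (ξt n)))))
    Filter.atTop

/-- The lower pressure `P̲_β(t)`. -/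
def lowerP1 {E : Type} [DecidableEq E] [Nonempty E] (G : Sys1 E)
    (β : ℕ → (ℕ → E) → ℝ) (ξt : ℕ → ℕ → E) (t : ℝ) : ℝ :=
  Filter.liminf (fun n : ℕ =>
    (1 / (n : ℝ)) *
      Real.log (∑ ω ∈ G.words 0 n, Real.exp (-t * Snb β n (wcat ω (ξt n)))))
    Filter.atTop

/-- The Bowen parameter `b = inf {t ≥ 0 : P̄_β(t) < 0}`. -/
def bowen1 {E : Type} [DecidableEq E] [Nonempty E] (G : Sys1 E)
    (β : ℕ → (ℕ → E) → ℝ) (ξt : ℕ → ℕ → E) : ℝ :=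
  sInf {t : ℝ | 0 ≤ t ∧ upperP1 G β ξt t < 0}

/-- The (topological) support of a measure on `ℝ`. -/
def msupp1 (μ : Measure ℝ) : Set ℝ :=
  {x | ∀ r : ℝ, 0 < r → 0 < μ (Metric.ball x r)}

/-- `μ` is `h`-Ahlfors regular with constant `C`. -/
def Ahlfors1 (μ : Measure ℝ) (h C : ℝ) : Prop :=
  1 ≤ C ∧ ∀ x ∈ msupp1 μ, ∀ r : ℝ, 0 < r → r ≤ 1 →
    ENNReal.ofReal (C⁻¹ * r ^ h) ≤ μ (Metric.ball x r) ∧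
      μ (Metric.ball x r) ≤ ENNReal.ofReal (C * r ^ h)

/-- The nonautonomous system associated to an affine IFS (with `|(φ_e^{(n)})'| = |s|`). -/
def AffIFS.toSys {E : Type} [DecidableEq E] (A : AffIFS E) : Sys1 E :=
  ⟨A.I, A.φ, fun n e _ => A.s n e⟩

/-- The nonautonomous system associated to a perturbation (with
`(φ̃_e^{(n)})'(x) = (φ_e^{(n)})' (1 + γ_e^{(n)}(x))`). -/
def Pert.toSys {E : Type} [DecidableEq E] {A : AffIFS E} (P : Pert A) : Sys1 E :=
  ⟨A.I, P.pmap, fun n e x => A.s n e * (1 + P.γ n e x)⟩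

/-- The hypotheses of the bounded-ratio Bowen-formula theorem (Theorem
`bowen_formula_bounded_ratio`, specialized to dimension 1): OSC, ESC, UCC, LVC and NEQ,
boundedness of `(κ̄_n/κ̲_n)`, and the existence of an `h`-Ahlfors measure with
`h = HD(J)` supported exactly on the limit set `J`. -/
def BddRatioHyp {E : Type} [DecidableEq E] [Nonempty E] (G : Sys1 E)
    (β : ℕ → (ℕ → E) → ℝ) : Prop :=
  G.OSC ∧ (∃ al au, ESC1 G β al au) ∧ (∃ θ, G.UCC θ) ∧ LVC1 G β ∧ (∃ ε, G.NEQ ε) ∧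
    (∃ M : ℝ, ∀ n, G.kmax n / G.kmin n ≤ M) ∧
    ∃ (h C : ℝ) (μ : Measure ℝ), 0 ≤ h ∧ ENNReal.ofReal h = dimH G.limitSet ∧
      Ahlfors1 μ h C ∧ msupp1 μ = G.limitSet

/-- The hypotheses of the subexponential-ratio Bowen-formula theorem (Theorem
`bowen_formula_subexponential_ratio`, specialized to dimension 1): OSC, ESC, UCC and NEQ,
`(1/n) log (κ̄_n/κ̲_n) → 0`, the existence of an `h`-Ahlfors measure with `h = HD(J)`
supported exactly on the limit set `J`, and the agreement of the upper and lower
pressures on a neighborhood of the Bowen parameter. -/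
def SubexpHyp {E : Type} [DecidableEq E] [Nonempty E] (G : Sys1 E)
    (β : ℕ → (ℕ → E) → ℝ) (ξt : ℕ → ℕ → E) : Prop :=
  G.OSC ∧ (∃ al au, ESC1 G β al au) ∧ (∃ θ, G.UCC θ) ∧ (∃ ε, G.NEQ ε) ∧
    Filter.Tendsto (fun n : ℕ => (1 / (n : ℝ)) * Real.log (G.kmax n / G.kmin n))
      Filter.atTop (nhds 0) ∧
    (∃ (h C : ℝ) (μ : Measure ℝ), 0 ≤ h ∧ ENNReal.ofReal h = dimH G.limitSet ∧
      Ahlfors1 μ h C ∧ msupp1 μ = G.limitSet) ∧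
    ∃ δ : ℝ, 0 < δ ∧ ∀ t : ℝ, |t - bowen1 G β ξt| < δ →
      upperP1 G β ξt t = lowerP1 G β ξt t

/-! On `[0,1]` the perturbed map `φ̃_e` differs from `φ_e` by `(φ_e)' ∫_{u_e}^x γ_e`, hence by at
most `κ̄ ε`. Moving both points of a pair by at most `κ̄ ε` cannot close a gap `g > 2 κ̄ ε`. -/

namespace AffIFS

variable {E : Type} [DecidableEq E] (A : AffIFS E) {n : ℕ}

theorem abs_s_le_kmaxLv {e : E} (he : e ∈ A.I n) : |A.s n e| ≤ A.kmaxLv n := by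
  refine le_csSup ?_ ⟨e, he, rfl⟩
  refine ((A.I n).finite_toSet.image fun e => |A.s n e|).bddAbove.mono ?_
  rintro r ⟨e, he, rfl⟩
  exact ⟨e, he, rfl⟩

theorem kmaxLv_pos (n : ℕ) : 0 < A.kmaxLv n := by
  obtain ⟨e, he⟩ := A.Ine n
  exact (abs_pos.mpr (A.sne n e he)).trans_le (A.abs_s_le_kmaxLv he)

theorem gap_le_abs_φ_sub {i j : E} (hi : i ∈ A.I n) (hj : j ∈ A.I n) (hij : i ≠ j)
    {x y : ℝ} (hx : x ∈ Icc (0 : ℝ) 1) (hy : y ∈ Icc (0 : ℝ) 1) :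
    A.gap n ≤ |A.φ n j x - A.φ n i y| := by
  refine csInf_le ⟨0, ?_⟩ ⟨i, hi, j, hj, hij, x, hx, y, hy, rfl⟩
  rintro r ⟨-, -, -, -, -, -, -, -, -, rfl⟩
  exact abs_nonneg _

end AffIFS

namespace Pert

variable {E : Type} [DecidableEq E] {A : AffIFS E} (P : Pert A) {n : ℕ} {e : E}

theorem continuousOn_γ (he : e ∈ A.I n) : ContinuousOn (P.γ n e) (Icc 0 1) := by
  obtain ⟨C, r, hr, hH⟩ := P.γholder n e he
  exact hH.continuousOn hr

theorem pmap_sub_φ (he : e ∈ A.I n) {x : ℝ} (hx : x ∈ Icc (0 : ℝ) 1) :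
    P.pmap n e x - A.φ n e x = A.s n e * ∫ t in (P.u n e)..x, P.γ n e t := by
  have hint : IntervalIntegrable (P.γ n e) volume (P.u n e) x :=
    ((P.continuousOn_γ he).mono (uIcc_subset_Icc (P.umem n e) hx)).intervalIntegrable
  rw [pmap, AffIFS.φ, AffIFS.φ, intervalIntegral.integral_add intervalIntegrable_const hint,
    intervalIntegral.integral_const, smul_eq_mul]
  ring

theorem abs_pmap_sub_φ_le (he : e ∈ A.I n) {x : ℝ} (hx : x ∈ Icc (0 : ℝ) 1) :
    |P.pmap n e x - A.φ n e x| ≤ A.kmaxLv n * P.ε n := by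
  have hsub : uIcc (P.u n e) x ⊆ uIcc 0 1 := by
    rw [uIcc_of_le (zero_le_one' ℝ)]
    exact uIcc_subset_Icc (P.umem n e) hx
  have hint : ‖∫ t in (P.u n e)..x, P.γ n e t‖ ≤ P.ε n * |x - P.u n e| :=
    intervalIntegral.norm_integral_le_of_norm_le_const fun t ht =>
      (P.γbound n e he t (uIcc_of_le (zero_le_one' ℝ) ▸ hsub (uIoc_subset_uIcc ht))).le
  have hdist : |x - P.u n e| ≤ 1 := by
    simpa using abs_sub_le_of_uIcc_subset_uIcc hsub
  have hε := (P.εmem n).1.le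
  rw [P.pmap_sub_φ he hx, abs_mul, ← Real.norm_eq_abs (∫ _ in _.._, _)]
  exact mul_le_mul (A.abs_s_le_kmaxLv he)
    (hint.trans (mul_le_of_le_one_right hε hdist)) (abs_nonneg _) (A.kmaxLv_pos n).le

end Pert

theorem perturbed_strong_separation_general {E : Type} [DecidableEq E]
    (A : AffIFS E) (P : Pert A)
    (hε : ∀ n, P.ε n < A.gap n / (2 * A.kmaxLv n)) :
    ∀ n, ∀ i ∈ A.I n, ∀ j ∈ A.I n, i ≠ j →
      ∀ x ∈ Set.Icc (0 : ℝ) 1, ∀ y ∈ Set.Icc (0 : ℝ) 1,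
        0 < |P.pmap n j x - P.pmap n i y| := by
  intro n i hi j hj hij x hx y hy
  have hδ : 2 * (A.kmaxLv n * P.ε n) < A.gap n := by
    have := A.kmaxLv_pos n
    linarith [(lt_div_iff₀ (by positivity)).mp (hε n)]
  have hgap := A.gap_le_abs_φ_sub hi hj hij hx hy
  have hjx := P.abs_pmap_sub_φ_le hj hx
  have hiy := P.abs_pmap_sub_φ_le hi hy
  have htri₁ := abs_sub_le (A.φ n j x) (P.pmap n j x) (A.φ n i y)
  have htri₂ := abs_sub_le (P.pmap n j x) (P.pmap n i y) (A.φ n i y)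
  rw [abs_sub_comm (A.φ n j x) (P.pmap n j x)] at htri₁
  linarith

/-- If the affine system `Φ` has the strong separation condition
(`g_{(n)} > 0` for all `n`) and `0 < ε_n < g_{(n)}/(2κ̄_{(n)})` for all `n`, then the
perturbed system `Φ̃` also has the strong separation condition. -/
theorem perturbed_strong_separation {E : Type} [DecidableEq E]
    (A : AffIFS E) (P : Pert A)
    (hsep : ∀ n, 0 < A.gap n)
    (hε : ∀ n, P.ε n < A.gap n / (2 * A.kmaxLv n)) :
    ∀ n, ∀ i ∈ A.I n, ∀ j ∈ A.I n, i ≠ j →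
      ∀ x ∈ Set.Icc (0 : ℝ) 1, ∀ y ∈ Set.Icc (0 : ℝ) 1,
        0 < |P.pmap n j x - P.pmap n i y| :=
  perturbed_strong_separation_general A P hε
end
end
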